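/- If x = (x₁, x̄) ∈ ℝ^N satisfies g_ε(x̄) < x₁ and |x| < 1 (i.e. x ∈ 𝑇̃Ω_β(ε)), then |x| > ε sin β / √(2(1 − cos β)). -/

import Mathlib

/-!
Put `s = sin (β / 2)` and `c = cos (β / 2)`. The region `g_ε(b) < x₁` of the `(x₁, b)`-plane lies in
the open half-plane `c x₁ + s b > ε c`, bounded by the line through `(ε, 0)` and `ε (cos β, sin β)`,
so every `x` with `g_ε(|x̄|) < x₁` satisfies `ε c < c x₁ + s |x̄| ≤ |x|`. Finally `ε sin β / √(2 (1 - cos β)) = ε c` by the half-angle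
formulas.
-/

open Real

theorem mul_cos_add_mul_sin_le {a b r : ℝ} (θ : ℝ) (hr : 0 ≤ r) (h : a ^ 2 + b ^ 2 ≤ r ^ 2) :
    a * cos θ + b * sin θ ≤ r := by
  refine le_of_sq_le_sq ?_ hr
  nlinarith [sq_nonneg (a * sin θ - b * cos θ), sin_sq_add_cos_sq θ]

theorem sin_div_sqrt_two_mul_one_sub_cos {β : ℝ} (hβ : β ∈ Set.Ioo 0 (2 * π)) :
    sin β / √(2 * (1 - cos β)) = cos (β / 2) := by
  have hs : 0 < sin (β / 2) := sin_pos_of_pos_of_lt_pi (by linarith [hβ.1]) (by linarith [hβ.2])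
  have hsq : 2 * (1 - cos β) = (2 * sin (β / 2)) ^ 2 := by
    rw [mul_pow, sin_sq_eq_half_sub, mul_div_cancel₀ β two_ne_zero]
    ring
  rw [hsq, sqrt_sq (by positivity), ← mul_div_cancel₀ β two_ne_zero, sin_two_mul,
    mul_div_cancel₀ β two_ne_zero]
  field_simp

section HalfPlane

variable {β ε b x₀ : ℝ}

theorem mul_cos_half_lt_of_sub_mul_tan_half_lt (hc : 0 < cos (β / 2))
    (h : ε - b * tan (β / 2) < x₀) :
    ε * cos (β / 2) < x₀ * cos (β / 2) + b * sin (β / 2) := by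
  rw [tan_eq_sin_div_cos] at h
  have := mul_lt_mul_of_pos_right h hc
  field_simp at this
  linarith

theorem mul_cos_half_lt_of_mul_cot_lt (hc : 0 < cos (β / 2)) (hsin : 0 < sin β)
    (hb : ε * sin β < b) (h : b * (cos β / sin β) < x₀) :
    ε * cos (β / 2) < x₀ * cos (β / 2) + b * sin (β / 2) := by
  rw [← mul_div_assoc, div_lt_iff₀ hsin] at h
  have hsin_eq : sin β = 2 * sin (β / 2) * cos (β / 2) := by
    rw [← sin_two_mul, mul_div_cancel₀ β two_ne_zero]
  have hcos_eq : cos β = 2 * cos (β / 2) ^ 2 - 1 := by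
    rw [← cos_two_mul, mul_div_cancel₀ β two_ne_zero]
  -- `(x₀, b)` lies in the cone with apex `ε (cos β, sin β)` spanned by `(1, 0)` and `(cos β, sin β)`,
  -- on both of which the functional `c x₁ + s b` is positive.
  have key : sin β * (x₀ * cos (β / 2) + b * sin (β / 2) - ε * cos (β / 2)) =
      cos (β / 2) * (x₀ * sin β - b * cos β) + cos (β / 2) * (b - ε * sin β) := by
    rw [hcos_eq, hsin_eq]
    linear_combination (2 * b * cos (β / 2)) * sin_sq_add_cos_sq (β / 2)
  have hpos : 0 < sin β * (x₀ * cos (β / 2) + b * sin (β / 2) - ε * cos (β / 2)) := by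
    rw [key]
    exact add_pos (mul_pos hc (sub_pos.2 h)) (mul_pos hc (sub_pos.2 hb))
  linarith [pos_of_mul_pos_right hpos hsin.le]

theorem mul_cos_half_lt_of_ite_lt (hβ : β ∈ Set.Ioo 0 π)
    (h : (if b ≤ ε * sin β then ε - b * tan (β / 2) else b * (cos β / sin β)) < x₀) :
    ε * cos (β / 2) < x₀ * cos (β / 2) + b * sin (β / 2) := by
  have hc : 0 < cos (β / 2) :=
    cos_pos_of_mem_Ioo ⟨by linarith [pi_pos, hβ.1], by linarith [hβ.2]⟩
  split_ifs at h with hb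
  · exact mul_cos_half_lt_of_sub_mul_tan_half_lt hc h
  · exact mul_cos_half_lt_of_mul_cot_lt hc (sin_pos_of_pos_of_lt_pi hβ.1 hβ.2) (not_le.1 hb) h

end HalfPlane

/-- if `x = (x₁, x̄) ∈ 𝑇̃Ω_β(ε)` (i.e. `g_ε(x̄) < x₁` and `|x| < 1`),
then `|x| > ε sin β / √(2(1 - cos β))`. -/
theorem norm_lower_bound (N : ℕ) (hN : 2 ≤ N) (β : ℝ) (hβ : β ∈ Set.Ioo 0 π)
    (ε : ℝ)
    (g : ℝ → ℝ → ℝ)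
    (hg : ∀ δ b : ℝ, g δ b =
      if b ≤ δ * Real.sin β then δ - b * Real.tan (β / 2)
      else b * (Real.cos β / Real.sin β))
    (x : EuclideanSpace ℝ (Fin N))
    (hx : g ε (Real.sqrt (‖x‖ ^ 2 - (x ⟨0, by omega⟩) ^ 2)) < x ⟨0, by omega⟩) :
    ε * Real.sin β / Real.sqrt (2 * (1 - Real.cos β)) < ‖x‖ := by
  set x₀ := x ⟨0, by omega⟩
  have hx₀ : x₀ ^ 2 ≤ ‖x‖ ^ 2 := by
    simpa using pow_le_pow_left₀ (norm_nonneg _) (PiLp.norm_apply_le x ⟨0, by omega⟩) 2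
  have hhalf := mul_cos_half_lt_of_ite_lt hβ (hg ε _ ▸ hx)
  rw [mul_div_assoc, sin_div_sqrt_two_mul_one_sub_cos ⟨hβ.1, by linarith [hβ.2, pi_pos]⟩]
  calc ε * cos (β / 2) < _ := hhalf
    _ ≤ ‖x‖ := mul_cos_add_mul_sin_le _ (norm_nonneg x) (by rw [sq_sqrt (by linarith)]; linarith)
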